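/- Let i : C → D be an injective chain map between bounded chain complexes of finite-dimensional real inner product spaces inducing isomorphisms on homology, with canonical subspaces V_k as above. Then for every k ≥ 1, the alternating sum Σ_{j=0}^{k−1} (−1)^j (dim D_j − dim C_j) is nonnegative when k is odd and nonpositive when k is even. -/

import Mathlib

/-!
The defining relation `V_m = (i(C_m) + ∂V_{m+1})ᗮ` splits `D_m` as `i(C_m) + ∂V_{m+1} + V_m`.
Because `i` is a quasi-isomorphism, every cycle of `D` lies in `i(C) + ∂V`; hence `∂` is injective
on `V_{m+1}`, `i(C_m) ∩ ∂V_{m+1} = 0` and `V_0 = 0`. So `dim D_m - dim C_m = dim V_m + dim V_{m+1}`,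
and the alternating sum telescopes to `(-1)^(k+1) dim V_k`.
-/

open Module

theorem Finset.sum_range_neg_one_pow_mul_add_succ (b : ℕ → ℤ) (k : ℕ) :
    ∑ j ∈ Finset.range k, (-1 : ℤ) ^ j * (b j + b (j + 1)) = b 0 - (-1) ^ k * b k := by
  calc ∑ j ∈ Finset.range k, (-1 : ℤ) ^ j * (b j + b (j + 1))
      = ∑ j ∈ Finset.range k, ((-1) ^ j * b j - (-1) ^ (j + 1) * b (j + 1)) :=
        Finset.sum_congr rfl fun j _ => by ring
    _ = b 0 - (-1) ^ k * b k := by rw [Finset.sum_range_sub' (fun j => (-1 : ℤ) ^ j * b j)]; simp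

namespace CanonicalDecomposition

variable {𝕜 : Type*} [RCLike 𝕜] {C D : ℕ → Type*}
  [∀ n, AddCommGroup (C n)] [∀ n, Module 𝕜 (C n)]
  [∀ n, NormedAddCommGroup (D n)] [∀ n, InnerProductSpace 𝕜 (D n)]
  {dC : ∀ n, C (n + 1) →ₗ[𝕜] C n} {dD : ∀ n, D (n + 1) →ₗ[𝕜] D n}
  {i : ∀ n, C n →ₗ[𝕜] D n} {V : ∀ n, Submodule 𝕜 (D n)}

theorem sup_eq_top [∀ n, FiniteDimensional 𝕜 (D n)]
    (hV : ∀ k, V k = (LinearMap.range (i k) ⊔ (V (k + 1)).map (dD k))ᗮ) (m : ℕ) :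
    LinearMap.range (i m) ⊔ (V (m + 1)).map (dD m) ⊔ V m = ⊤ := by
  rw [hV m]
  exact Submodule.sup_orthogonal_of_hasOrthogonalProjection

theorem eq_zero_of_mem_V_of_mem_sup
    (hV : ∀ k, V k = (LinearMap.range (i k) ⊔ (V (k + 1)).map (dD k))ᗮ) {m : ℕ} {v : D m}
    (hv : v ∈ V m) (hmem : v ∈ LinearMap.range (i m) ⊔ (V (m + 1)).map (dD m)) : v = 0 := by
  rw [hV m] at hv
  simpa [Submodule.inf_orthogonal_eq_bot] using Submodule.mem_inf.mpr ⟨hmem, hv⟩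

theorem range_dD_le [∀ n, FiniteDimensional 𝕜 (D n)]
    (hdD : ∀ n, (dD n).comp (dD (n + 1)) = 0)
    (hchain : ∀ n, (dD n).comp (i (n + 1)) = (i n).comp (dC n))
    (hV : ∀ k, V k = (LinearMap.range (i k) ⊔ (V (k + 1)).map (dD k))ᗮ) (m : ℕ) :
    LinearMap.range (dD m) ≤ LinearMap.range (i m) ⊔ (V (m + 1)).map (dD m) := by
  rw [LinearMap.range_eq_map, ← sup_eq_top hV (m + 1), Submodule.map_sup, Submodule.map_sup]
  refine sup_le (sup_le ?_ ?_) le_sup_right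
  · rw [← LinearMap.range_comp, hchain m]
    exact le_sup_of_le_left (LinearMap.range_comp_le_range _ _)
  · rw [← Submodule.map_comp, hdD m, Submodule.map_zero]
    exact bot_le

theorem cycle_mem_sup [∀ n, FiniteDimensional 𝕜 (D n)]
    (hdD : ∀ n, (dD n).comp (dD (n + 1)) = 0)
    (hchain : ∀ n, (dD n).comp (i (n + 1)) = (i n).comp (dC n))
    (hHsurj : ∀ n, ∀ x : D (n + 1), dD n x = 0 →
      ∃ y : C (n + 1), dC n y = 0 ∧ ∃ z : D (n + 2), x = i (n + 1) y + dD (n + 1) z)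
    (hV : ∀ k, V k = (LinearMap.range (i k) ⊔ (V (k + 1)).map (dD k))ᗮ) {m : ℕ} {x : D (m + 1)}
    (hx : dD m x = 0) :
    x ∈ LinearMap.range (i (m + 1)) ⊔ (V (m + 2)).map (dD (m + 1)) := by
  obtain ⟨y, -, z, rfl⟩ := hHsurj m x hx
  exact add_mem (Submodule.mem_sup_left ⟨y, rfl⟩) (range_dD_le hdD hchain hV (m + 1) ⟨z, rfl⟩)

theorem V_zero_eq_bot [∀ n, FiniteDimensional 𝕜 (D n)]
    (hdD : ∀ n, (dD n).comp (dD (n + 1)) = 0)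
    (hchain : ∀ n, (dD n).comp (i (n + 1)) = (i n).comp (dC n))
    (hHsurj0 : ∀ x : D 0, ∃ y : C 0, ∃ z : D 1, x = i 0 y + dD 0 z)
    (hV : ∀ k, V k = (LinearMap.range (i k) ⊔ (V (k + 1)).map (dD k))ᗮ) : V 0 = ⊥ := by
  refine (Submodule.eq_bot_iff _).mpr fun v hv => eq_zero_of_mem_V_of_mem_sup hV hv ?_
  obtain ⟨y, z, rfl⟩ := hHsurj0 v
  exact add_mem (Submodule.mem_sup_left ⟨y, rfl⟩) (range_dD_le hdD hchain hV 0 ⟨z, rfl⟩)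

theorem eq_zero_of_mem_V_of_dD_eq_zero [∀ n, FiniteDimensional 𝕜 (D n)]
    (hdD : ∀ n, (dD n).comp (dD (n + 1)) = 0)
    (hchain : ∀ n, (dD n).comp (i (n + 1)) = (i n).comp (dC n))
    (hHsurj : ∀ n, ∀ x : D (n + 1), dD n x = 0 →
      ∃ y : C (n + 1), dC n y = 0 ∧ ∃ z : D (n + 2), x = i (n + 1) y + dD (n + 1) z)
    (hV : ∀ k, V k = (LinearMap.range (i k) ⊔ (V (k + 1)).map (dD k))ᗮ) {m : ℕ} {v : D (m + 1)}
    (hv : v ∈ V (m + 1)) (hdv : dD m v = 0) : v = 0 :=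
  eq_zero_of_mem_V_of_mem_sup hV hv (cycle_mem_sup hdD hchain hHsurj hV hdv)

theorem exists_eq_dC_of_i_eq_dD (hdD : ∀ n, (dD n).comp (dD (n + 1)) = 0)
    (hchain : ∀ n, (dD n).comp (i (n + 1)) = (i n).comp (dC n))
    (hinj : ∀ n, Function.Injective (i n))
    (hHinj : ∀ n, ∀ y : C (n + 1), dC n y = 0 →
      (∃ z : D (n + 2), i (n + 1) y = dD (n + 1) z) → ∃ w : C (n + 2), y = dC (n + 1) w)
    (hHinj0 : ∀ y : C 0, (∃ z : D 1, i 0 y = dD 0 z) → ∃ w : C 1, y = dC 0 w)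
    {m : ℕ} {y : C m} {z : D (m + 1)} (hyz : i m y = dD m z) : ∃ w : C (m + 1), y = dC m w := by
  cases m with
  | zero => exact hHinj0 y ⟨z, hyz⟩
  | succ n =>
    refine hHinj n y (hinj n ?_) ⟨z, hyz⟩
    rw [← LinearMap.comp_apply, ← hchain n, LinearMap.comp_apply, hyz, ← LinearMap.comp_apply,
      hdD n, LinearMap.zero_apply, map_zero]

theorem range_inf_map_V_eq_bot [∀ n, FiniteDimensional 𝕜 (D n)]
    (hdD : ∀ n, (dD n).comp (dD (n + 1)) = 0)
    (hchain : ∀ n, (dD n).comp (i (n + 1)) = (i n).comp (dC n))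
    (hinj : ∀ n, Function.Injective (i n))
    (hHsurj : ∀ n, ∀ x : D (n + 1), dD n x = 0 →
      ∃ y : C (n + 1), dC n y = 0 ∧ ∃ z : D (n + 2), x = i (n + 1) y + dD (n + 1) z)
    (hHinj : ∀ n, ∀ y : C (n + 1), dC n y = 0 →
      (∃ z : D (n + 2), i (n + 1) y = dD (n + 1) z) → ∃ w : C (n + 2), y = dC (n + 1) w)
    (hHinj0 : ∀ y : C 0, (∃ z : D 1, i 0 y = dD 0 z) → ∃ w : C 1, y = dC 0 w)
    (hV : ∀ k, V k = (LinearMap.range (i k) ⊔ (V (k + 1)).map (dD k))ᗮ) (m : ℕ) :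
    LinearMap.range (i m) ⊓ (V (m + 1)).map (dD m) = ⊥ := by
  refine (Submodule.eq_bot_iff _).mpr ?_
  rintro _ ⟨⟨y, rfl⟩, v, hv, hvy⟩
  obtain ⟨w, rfl⟩ := exists_eq_dC_of_i_eq_dD hdD hchain hinj hHinj hHinj0 hvy.symm
  -- `v - i w` is a cycle, hence lies in `i(C) + ∂V`, and then so does `v ∈ V`.
  have hcycle : dD m (v - i (m + 1) w) = 0 := by
    rw [map_sub, hvy, ← LinearMap.comp_apply (i m), ← hchain m, LinearMap.comp_apply, sub_self]
  have hv0 : v = 0 := by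
    refine eq_zero_of_mem_V_of_mem_sup hV hv ?_
    simpa using add_mem (cycle_mem_sup hdD hchain hHsurj hV hcycle)
      (Submodule.mem_sup_left ⟨w, rfl⟩)
  rw [← hvy, hv0, map_zero]

theorem finrank_map_V [∀ n, FiniteDimensional 𝕜 (D n)]
    (hdD : ∀ n, (dD n).comp (dD (n + 1)) = 0)
    (hchain : ∀ n, (dD n).comp (i (n + 1)) = (i n).comp (dC n))
    (hHsurj : ∀ n, ∀ x : D (n + 1), dD n x = 0 →
      ∃ y : C (n + 1), dC n y = 0 ∧ ∃ z : D (n + 2), x = i (n + 1) y + dD (n + 1) z)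
    (hV : ∀ k, V k = (LinearMap.range (i k) ⊔ (V (k + 1)).map (dD k))ᗮ) (m : ℕ) :
    finrank 𝕜 ((V (m + 1)).map (dD m)) = finrank 𝕜 (V (m + 1)) := by
  have hinjV : Function.Injective ((dD m).comp (V (m + 1)).subtype) := by
    rw [← LinearMap.ker_eq_bot, LinearMap.ker_eq_bot']
    exact fun v hv => Subtype.ext (eq_zero_of_mem_V_of_dD_eq_zero hdD hchain hHsurj hV v.2 hv)
  rw [← LinearMap.finrank_range_of_inj hinjV, LinearMap.range_comp, Submodule.range_subtype]

theorem finrank_D_eq_add [∀ n, FiniteDimensional 𝕜 (D n)]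
    (hdD : ∀ n, (dD n).comp (dD (n + 1)) = 0)
    (hchain : ∀ n, (dD n).comp (i (n + 1)) = (i n).comp (dC n))
    (hinj : ∀ n, Function.Injective (i n))
    (hHsurj : ∀ n, ∀ x : D (n + 1), dD n x = 0 →
      ∃ y : C (n + 1), dC n y = 0 ∧ ∃ z : D (n + 2), x = i (n + 1) y + dD (n + 1) z)
    (hHinj : ∀ n, ∀ y : C (n + 1), dC n y = 0 →
      (∃ z : D (n + 2), i (n + 1) y = dD (n + 1) z) → ∃ w : C (n + 2), y = dC (n + 1) w)
    (hHinj0 : ∀ y : C 0, (∃ z : D 1, i 0 y = dD 0 z) → ∃ w : C 1, y = dC 0 w)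
    (hV : ∀ k, V k = (LinearMap.range (i k) ⊔ (V (k + 1)).map (dD k))ᗮ) (m : ℕ) :
    finrank 𝕜 (D m) = finrank 𝕜 (C m) + finrank 𝕜 (V (m + 1)) + finrank 𝕜 (V m) := by
  have horth := Submodule.finrank_add_finrank_orthogonal
    (LinearMap.range (i m) ⊔ (V (m + 1)).map (dD m))
  have hsup := Submodule.finrank_sup_add_finrank_inf_eq
    (LinearMap.range (i m)) ((V (m + 1)).map (dD m))
  rw [← hV m] at horth
  rw [range_inf_map_V_eq_bot hdD hchain hinj hHsurj hHinj hHinj0 hV, finrank_bot, add_zero,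
    LinearMap.finrank_range_of_inj (hinj m), finrank_map_V hdD hchain hHsurj hV] at hsup
  omega

end CanonicalDecomposition

open CanonicalDecomposition in
theorem stmt9_general (C D : ℕ → Type)
    [∀ n, NormedAddCommGroup (C n)] [∀ n, InnerProductSpace ℝ (C n)]
    [∀ n, NormedAddCommGroup (D n)] [∀ n, InnerProductSpace ℝ (D n)]
    [∀ n, FiniteDimensional ℝ (D n)]
    (dC : ∀ n, C (n + 1) →ₗ[ℝ] C n) (dD : ∀ n, D (n + 1) →ₗ[ℝ] D n)
    (hdD : ∀ n, (dD n).comp (dD (n + 1)) = 0)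
    (i : ∀ n, C n →ₗ[ℝ] D n)
    (hchain : ∀ n, (dD n).comp (i (n + 1)) = (i n).comp (dC n))
    (hinj : ∀ n, Function.Injective (i n))
    -- `i` induces isomorphisms on homology in all degrees
    (hHsurj : ∀ n, ∀ x : D (n + 1), dD n x = 0 →
      ∃ y : C (n + 1), dC n y = 0 ∧ ∃ z : D (n + 2), x = i (n + 1) y + dD (n + 1) z)
    (hHsurj0 : ∀ x : D 0, ∃ y : C 0, ∃ z : D 1, x = i 0 y + dD 0 z)
    (hHinj : ∀ n, ∀ y : C (n + 1), dC n y = 0 →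
      (∃ z : D (n + 2), i (n + 1) y = dD (n + 1) z) → ∃ w : C (n + 2), y = dC (n + 1) w)
    (hHinj0 : ∀ y : C 0, (∃ z : D 1, i 0 y = dD 0 z) → ∃ w : C 1, y = dC 0 w)
    -- the canonical subspaces, defined inductively from the top degree
    (V : ∀ n, Submodule ℝ (D n))
    (hV : ∀ k, V k = (LinearMap.range (i k) ⊔ (V (k + 1)).map (dD k))ᗮ) :
    ∀ k, 1 ≤ k →
      (Odd k → 0 ≤ ∑ j ∈ Finset.range k,
        (-1 : ℤ) ^ j * ((Module.finrank ℝ (D j) : ℤ) - (Module.finrank ℝ (C j) : ℤ))) ∧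
      (Even k → ∑ j ∈ Finset.range k,
        (-1 : ℤ) ^ j * ((Module.finrank ℝ (D j) : ℤ) - (Module.finrank ℝ (C j) : ℤ)) ≤ 0) := by
  have hdim (j : ℕ) : (finrank ℝ (D j) : ℤ) - finrank ℝ (C j) =
      finrank ℝ (V j) + finrank ℝ (V (j + 1)) := by
    have := finrank_D_eq_add hdD hchain hinj hHsurj hHinj hHinj0 hV j
    omega
  have hsum (k : ℕ) : ∑ j ∈ Finset.range k,
      (-1 : ℤ) ^ j * ((finrank ℝ (D j) : ℤ) - finrank ℝ (C j)) = -(-1) ^ k * finrank ℝ (V k) := by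
    simp_rw [hdim]
    rw [Finset.sum_range_neg_one_pow_mul_add_succ (fun j => (finrank ℝ (V j) : ℤ)),
      V_zero_eq_bot hdD hchain hHsurj0 hV, finrank_bot]
    ring
  intro k _
  refine ⟨fun hk => ?_, fun hk => ?_⟩ <;> rw [hsum, hk.neg_one_pow] <;> simp

/-- for every `k ≥ 1`, the alternating sum
`Σ_{j<k} (−1)^j (dim D_j − dim C_j)` is nonnegative for odd `k`
and nonpositive for even `k`. -/
theorem stmt9 (C D : ℕ → Type)
    [∀ n, NormedAddCommGroup (C n)] [∀ n, InnerProductSpace ℝ (C n)]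
    [∀ n, FiniteDimensional ℝ (C n)]
    [∀ n, NormedAddCommGroup (D n)] [∀ n, InnerProductSpace ℝ (D n)]
    [∀ n, FiniteDimensional ℝ (D n)]
    (N : ℕ) (hbdC : ∀ n, N < n → Subsingleton (C n)) (hbdD : ∀ n, N < n → Subsingleton (D n))
    (dC : ∀ n, C (n + 1) →ₗ[ℝ] C n) (dD : ∀ n, D (n + 1) →ₗ[ℝ] D n)
    (hdC : ∀ n, (dC n).comp (dC (n + 1)) = 0)
    (hdD : ∀ n, (dD n).comp (dD (n + 1)) = 0)
    (i : ∀ n, C n →ₗ[ℝ] D n)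
    (hchain : ∀ n, (dD n).comp (i (n + 1)) = (i n).comp (dC n))
    (hinj : ∀ n, Function.Injective (i n))
    -- `i` induces isomorphisms on homology in all degrees
    (hHsurj : ∀ n, ∀ x : D (n + 1), dD n x = 0 →
      ∃ y : C (n + 1), dC n y = 0 ∧ ∃ z : D (n + 2), x = i (n + 1) y + dD (n + 1) z)
    (hHsurj0 : ∀ x : D 0, ∃ y : C 0, ∃ z : D 1, x = i 0 y + dD 0 z)
    (hHinj : ∀ n, ∀ y : C (n + 1), dC n y = 0 →
      (∃ z : D (n + 2), i (n + 1) y = dD (n + 1) z) → ∃ w : C (n + 2), y = dC (n + 1) w)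
    (hHinj0 : ∀ y : C 0, (∃ z : D 1, i 0 y = dD 0 z) → ∃ w : C 1, y = dC 0 w)
    -- the canonical subspaces, defined inductively from the top degree
    (V : ∀ n, Submodule ℝ (D n))
    (hV : ∀ k, V k = (LinearMap.range (i k) ⊔ (V (k + 1)).map (dD k))ᗮ) :
    ∀ k, 1 ≤ k →
      (Odd k → 0 ≤ ∑ j ∈ Finset.range k,
        (-1 : ℤ) ^ j * ((Module.finrank ℝ (D j) : ℤ) - (Module.finrank ℝ (C j) : ℤ))) ∧
      (Even k → ∑ j ∈ Finset.range k,
        (-1 : ℤ) ^ j * ((Module.finrank ℝ (D j) : ℤ) - (Module.finrank ℝ (C j) : ℤ)) ≤ 0) :=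
  stmt9_general C D dC dD hdD i hchain hinj hHsurj hHsurj0 hHinj hHinj0 V hV
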